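/- With the notation above, for 2t > s > t > 0 and n ≥ 4: s²·det(U_{n−2}) + 2ts²·det(U_{n−3}) + t²s²·det(U_{n−4}) > s·det(U_{n−1}) + ts·det(U_{n−2}), i.e., det(U_n^{(rc)}) exceeds |det(U_n^{(r)})| = |det(U_n^{(c)})| = s·det(U_{n−1}) + ts·det(U_{n−2}). -/
import Mathlib


/-- `U n = det(U_n(s,t))`, given by `U 0 = 0`, `U 1 = t`, `U 2 = t²` and
`U n = t·U (n-1) + s²·U (n-2)` for `n ≥ 3`. -/
def seqU (s t : ℝ) : ℕ → ℝ
  | 0 => 0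
  | 1 => t
  | 2 => t ^ 2
  | (n + 3) => t * seqU s t (n + 2) + s ^ 2 * seqU s t (n + 1)

lemma seqU_rec (s t : ℝ) : ∀ n, seqU s t (n + 2) = t * seqU s t (n + 1) + s ^ 2 * seqU s t n
  | 0 => by simp [seqU]; ring
  | (n + 1) => rfl

lemma seqU_nonneg (s t : ℝ) (ht : 0 < t) : ∀ n, 0 ≤ seqU s t n
  | 0 => le_refl 0
  | 1 => ht.le
  | 2 => by show (0:ℝ) ≤ t ^ 2; positivity
  | (n + 3) => by
    have h1 := seqU_nonneg s t ht (n + 2)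
    have h2 := seqU_nonneg s t ht (n + 1)
    show 0 ≤ t * seqU s t (n + 2) + s ^ 2 * seqU s t (n + 1)
    positivity

lemma seqU_pos (s t : ℝ) (ht : 0 < t) : ∀ n, 0 < seqU s t (n + 1)
  | 0 => ht
  | 1 => by show (0:ℝ) < t ^ 2; positivity
  | (n + 2) => by
    have h1 := seqU_pos s t ht (n + 1)
    have h2 := seqU_nonneg s t ht (n + 1)
    show 0 < t * seqU s t (n + 2) + s ^ 2 * seqU s t (n + 1)
    nlinarith

theorem Urc_beats_Ur_Uc (s t : ℝ) (ht : 0 < t) (h1 : t < s) (h2 : s < 2 * t) :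
    ∀ n : ℕ, 4 ≤ n →
      s ^ 2 * seqU s t (n - 2) + 2 * t * s ^ 2 * seqU s t (n - 3) +
          t ^ 2 * s ^ 2 * seqU s t (n - 4) >
        s * seqU s t (n - 1) + t * s * seqU s t (n - 2) := by
  intro n hn
  obtain ⟨m, rfl⟩ := Nat.exists_eq_add_of_le hn
  have e1 : 4 + m - 1 = m + 3 := by omega
  have e2 : 4 + m - 2 = m + 2 := by omega
  have e3 : 4 + m - 3 = m + 1 := by omega
  have e4 : 4 + m - 4 = m := by omega
  rw [e1, e2, e3, e4, seqU_rec s t (m + 1), seqU_rec s t m]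
  have hp := seqU_pos s t ht m
  have hq := seqU_nonneg s t ht m
  have hs : 0 < s := ht.trans h1
  nlinarith [mul_pos (mul_pos hs (sub_pos.mpr h2)) (mul_pos (sub_pos.mpr h1) hp),
    mul_nonneg (mul_nonneg (sq_nonneg s) (sq_nonneg (s - t))) hq]
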